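/- Let R be a (not necessarily commutative) ring and suppose elements p_{-2}, p_{-4}, p_{-6}, ... and p_{-1}, p_{-3}, ... of an R-module M satisfy p_{-2j} = Σ_{μ=1}^{2j-1} A_{-2j,μ}(p_{-2j+μ}) for all j ≥ 1, where each A_{-2j,μ} : M → M is additive. Then for each l ≥ 1 there exist additive maps B_{-2l,-2μ+1} : M → M (1 ≤ μ ≤ l), given by sums over compositions of 2l-2μ into positive even parts of composites of the A's, such that p_{-2l} = Σ_{μ=1}^{l} B_{-2l,-2μ+1}(p_{-2μ+1}). -/

import Mathlib

/-!
Split the defining relation of `p (-2 * l)` into its odd and even shifts. An odd shift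
`μ = 2 * (l - ν) + 1` contributes `A (-2 * l) μ` applied to the odd-indexed `p (-2 * ν + 1)`,
while an even shift `μ = 2 * s` contributes `A (-2 * l) μ` applied to `p (-2 * (l - s))`, which
by strong induction on `l` already lies in the span of `p (-1), …, p (-2 * (l - s) + 1)` under
the sums of composites of the `A`'s. That span is stable under left composition with any `A`.
-/

open Finset

section

variable {M ι : Type*} [AddCommMonoid M]

theorem AddSubmonoid.mul_mem_closure_of_mul_mem {R : Type*} [NonUnitalNonAssocSemiring R]
    {P : Set R} {g x : R} (hg : ∀ y ∈ P, g * y ∈ P) (hx : x ∈ closure P) :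
    g * x ∈ closure P := by
  have hmap : (closure P).map (AddMonoidHom.mulLeft g) ≤ closure P := by
    rw [AddMonoidHom.map_mclosure]
    exact closure_mono (Set.image_subset_iff.2 hg)
  exact hmap ⟨x, hx, rfl⟩

def endSpan (S : AddSubmonoid (AddMonoid.End M)) (q : ι → M) (s : Finset ι) :
    AddSubmonoid M :=
  AddSubmonoid.closure {x | ∃ ν ∈ s, ∃ f ∈ S, f (q ν) = x}

variable {S : AddSubmonoid (AddMonoid.End M)} {q : ι → M}

theorem apply_mem_endSpan {s : Finset ι} {ν : ι} (hν : ν ∈ s) {f : AddMonoid.End M}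
    (hf : f ∈ S) : f (q ν) ∈ endSpan S q s :=
  AddSubmonoid.subset_closure ⟨ν, hν, f, hf, rfl⟩

theorem endSpan_mono {s t : Finset ι} (hst : s ⊆ t) : endSpan S q s ≤ endSpan S q t :=
  AddSubmonoid.closure_mono fun _ ⟨ν, hν, f, hf, hx⟩ => ⟨ν, hst hν, f, hf, hx⟩

theorem map_mem_endSpan {s : Finset ι} {g : AddMonoid.End M} (hg : ∀ f ∈ S, g * f ∈ S)
    {x : M} (hx : x ∈ endSpan S q s) : g x ∈ endSpan S q s := by
  have hmap : (endSpan S q s).map g ≤ endSpan S q s := by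
    rw [endSpan, AddMonoidHom.map_mclosure]
    refine AddSubmonoid.closure_mono ?_
    rintro _ ⟨_, ⟨ν, hν, f, hf, rfl⟩, rfl⟩
    exact ⟨ν, hν, g * f, hg f hf, rfl⟩
  exact hmap ⟨x, hx, rfl⟩

theorem exists_eq_sum_of_mem_endSpan {s : Finset ι} {x : M} (hx : x ∈ endSpan S q s) :
    ∃ B : ι → AddMonoid.End M, (∀ μ, B μ ∈ S) ∧ x = ∑ μ ∈ s, B μ (q μ) := by
  classical
  induction hx using AddSubmonoid.closure_induction with
  | mem x hx =>
    obtain ⟨ν, hν, f, hf, rfl⟩ := hx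
    refine ⟨Pi.single ν f, fun μ => ?_, ?_⟩
    · rcases eq_or_ne μ ν with rfl | hμ
      · simpa using hf
      · simp [hμ]
    · rw [sum_eq_single_of_mem ν hν fun μ _ hμ => by simp [hμ], Pi.single_eq_same]
  | zero => exact ⟨0, fun _ => zero_mem S, by simp⟩
  | add x y _ _ hx hy =>
    obtain ⟨B, hBS, rfl⟩ := hx
    obtain ⟨C, hCS, rfl⟩ := hy
    exact ⟨B + C, fun μ => add_mem (hBS μ) (hCS μ), by rw [← sum_add_distrib]; rfl⟩

def sumsOfComposites (A : ℤ → ℤ → AddMonoid.End M) : AddSubmonoid (AddMonoid.End M) :=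
  AddSubmonoid.closure
    {f | ∃ L : List (ℤ × ℤ), L ≠ [] ∧ f = (L.map (fun q => A q.1 q.2)).prod}

variable {A : ℤ → ℤ → AddMonoid.End M}

theorem mem_sumsOfComposites (a b : ℤ) : A a b ∈ sumsOfComposites A :=
  AddSubmonoid.subset_closure ⟨[(a, b)], by simp⟩

theorem mul_mem_sumsOfComposites (a b : ℤ) {f : AddMonoid.End M}
    (hf : f ∈ sumsOfComposites A) : A a b * f ∈ sumsOfComposites A :=
  AddSubmonoid.mul_mem_closure_of_mul_mem
    (fun _ ⟨L, _, hL⟩ => ⟨(a, b) :: L, by simp [hL]⟩) hf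

theorem even_mem_endSpan_odd {p : ℤ → M}
    (hp : ∀ j : ℤ, 1 ≤ j →
      p (-2 * j) = ∑ μ ∈ Icc (1 : ℤ) (2 * j - 1), A (-2 * j) μ (p (-2 * j + μ)))
    (l : ℤ) (hl : 1 ≤ l) :
    p (-2 * l) ∈ endSpan (sumsOfComposites A) (fun ν => p (-2 * ν + 1)) (Icc 1 l) := by
  induction l using Int.strongRec (m := 1) with
  | lt l hl1 => omega
  | ge l _ ih =>
    rw [hp l hl]
    refine sum_mem fun μ hμ => ?_
    rw [mem_Icc] at hμ
    obtain ⟨k, rfl | rfl⟩ := Int.even_or_odd' μ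
    · have hk : p (-2 * l + 2 * k) ∈ endSpan (sumsOfComposites A)
          (fun ν => p (-2 * ν + 1)) (Icc 1 (l - k)) := by
        rw [show -2 * l + 2 * k = -2 * (l - k) by ring]
        exact ih (l - k) (by omega) (by omega)
      exact map_mem_endSpan (fun _ => mul_mem_sumsOfComposites _ _)
        (endSpan_mono (Icc_subset_Icc_right (by omega)) hk)
    · rw [show -2 * l + (2 * k + 1) = -2 * (l - k) + 1 by ring]
      exact apply_mem_endSpan (q := fun ν => p (-2 * ν + 1)) (mem_Icc.2 ⟨by omega, by omega⟩)
        (mem_sumsOfComposites _ _)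

end

theorem lemma_odd_even_general {M : Type*} [AddCommGroup M]
    (p : ℤ → M) (A : ℤ → ℤ → AddMonoid.End M)
    (hp : ∀ j : ℤ, 1 ≤ j →
      p (-2 * j) = ∑ μ ∈ Finset.Icc (1 : ℤ) (2 * j - 1), A (-2 * j) μ (p (-2 * j + μ))) :
    ∀ l : ℤ, 1 ≤ l → ∃ B : ℤ → AddMonoid.End M,
      (∀ μ : ℤ, B μ ∈ AddSubmonoid.closure
        {f : AddMonoid.End M | ∃ L : List (ℤ × ℤ), L ≠ [] ∧
          f = (L.map (fun q => A q.1 q.2)).prod}) ∧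
      p (-2 * l) = ∑ μ ∈ Finset.Icc (1 : ℤ) l, B μ (p (-2 * μ + 1)) :=
  fun l hl => exists_eq_sum_of_mem_endSpan (even_mem_endSpan_odd hp l hl)

/-- Lemma 2.1 of the paper: if the even-indexed quantities `p (-2j)` are expressed as
additive-operator combinations of the higher-indexed quantities, then each `p (-2l)` can
be expressed solely in terms of the odd-indexed quantities `p (-2μ+1)` (1 ≤ μ ≤ l),
with coefficient operators `B` that are sums of composites of the operators `A`. -/
theorem lemma_odd_even {R : Type*} [Ring R] {M : Type*} [AddCommGroup M] [Module R M]
    (p : ℤ → M) (A : ℤ → ℤ → AddMonoid.End M)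
    (hp : ∀ j : ℤ, 1 ≤ j →
      p (-2 * j) = ∑ μ ∈ Finset.Icc (1 : ℤ) (2 * j - 1), A (-2 * j) μ (p (-2 * j + μ))) :
    ∀ l : ℤ, 1 ≤ l → ∃ B : ℤ → AddMonoid.End M,
      (∀ μ : ℤ, B μ ∈ AddSubmonoid.closure
        {f : AddMonoid.End M | ∃ L : List (ℤ × ℤ), L ≠ [] ∧
          f = (L.map (fun q => A q.1 q.2)).prod}) ∧
      p (-2 * l) = ∑ μ ∈ Finset.Icc (1 : ℤ) l, B μ (p (-2 * μ + 1)) :=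
  lemma_odd_even_general p A hp
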